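/- Let the data matrices X_0, X, U be generated by the system, with T ≥ 1. Let K ∈ ℝ^{m×n} and λ ∈ ℝ. Suppose vectors α, β satisfy: (i) X K_U α + X K_0 β = W Λ_λ X_0 K_U α; (ii) (I_T ⊗ K) Z Λ_λ X_0 K_U α + U K_0 β = 0; and (iii) v := X_0 K_U α ≠ 0. Then v is an eigenvector of A − B K with eigenvalue λ, i.e., (A − B K)v = λ v. -/

import Mathlib

/-!
The data matrices act linearly on experiments, so for every `c` the columns combined with
weights `c` form a trajectory of the system. Take `c = K_U α + K₀ β`: since `X₀ K₀ β = 0` and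
`U K_U α = 0`, its initial state is `v`, by (ii) its first input is `-K v`, and by (i) its
first successor state is `λ v`. The first step of the dynamics then reads `λ v = A v - B K v`.
-/

open Matrix

/-- The full state sequence over times `0, 1, …, T` built from the initial state `x0` and the
subsequent states `x 0 = x(1), …, x (T-1) = x(T)`. -/
def stateSeq {n T : ℕ} (x0 : Fin n → ℝ) (x : Fin T → Fin n → ℝ) : Fin (T + 1) → Fin n → ℝ :=
  Fin.cases x0 x

/-- `(x0, u, x)` is a trajectory of the system `x(t+1) = A x(t) + B u(t)`. -/
def IsTrajectory {n m T : ℕ} (A : Matrix (Fin n) (Fin n) ℝ) (B : Matrix (Fin n) (Fin m) ℝ)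
    (x0 : Fin n → ℝ) (u : Fin T → Fin m → ℝ) (x : Fin T → Fin n → ℝ) : Prop :=
  ∀ t : Fin T, x t = A.mulVec (stateSeq x0 x t.castSucc) + B.mulVec (u t)

/-- The data matrices are generated by `N` experiments of length `T` on the system. -/
def DataGenerated {n m T N : ℕ} (A : Matrix (Fin n) (Fin n) ℝ) (B : Matrix (Fin n) (Fin m) ℝ)
    (X0 : Matrix (Fin n) (Fin N) ℝ) (X : Matrix (Fin T × Fin n) (Fin N) ℝ)
    (U : Matrix (Fin T × Fin m) (Fin N) ℝ) : Prop :=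
  ∀ i : Fin N, IsTrajectory A B (fun j => X0 j i) (fun t j => U (t, j) i) (fun t j => X (t, j) i)

/-- The columns of `Kb` form a basis of `Ker M`. -/
def IsKerBasis {α β γ : Type*} [Fintype β] [Fintype γ]
    (M : Matrix α β ℝ) (Kb : Matrix β γ ℝ) : Prop :=
  Function.Injective Kb.mulVecLin ∧ LinearMap.range Kb.mulVecLin = LinearMap.ker M.mulVecLin

/-- `Λ_λ = [I; λI; λ²I; …; λ^T I] ∈ ℝ^{n(T+1) × n}`. -/
def LamMat (T n : ℕ) (lam : ℝ) : Matrix (Fin (T + 1) × Fin n) (Fin n) ℝ :=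
  Matrix.of fun p q => lam ^ (p.1 : ℕ) * (if p.2 = q then 1 else 0)

/-- `W = [0_{nT×n}  I_{nT}]`, the matrix extracting the last `nT` rows of `Λ_λ`. -/
def Wmat (T n : ℕ) : Matrix (Fin T × Fin n) (Fin (T + 1) × Fin n) ℝ :=
  Matrix.of fun p q => if q.1 = p.1.succ ∧ q.2 = p.2 then 1 else 0

/-- `Z = [I_{nT}  0_{nT×n}]`, the matrix extracting the first `nT` rows of `Λ_λ`. -/
def Zmat (T n : ℕ) : Matrix (Fin T × Fin n) (Fin (T + 1) × Fin n) ℝ :=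
  Matrix.of fun p q => if q.1 = p.1.castSucc ∧ q.2 = p.2 then 1 else 0

open Kronecker

section StateSpaceData

variable {n m T : ℕ} {A : Matrix (Fin n) (Fin n) ℝ} {B : Matrix (Fin n) (Fin m) ℝ}

theorem IsKerBasis.mulVec_mulVec_eq_zero {α β γ : Type*} [Fintype β] [Fintype γ]
    {M : Matrix α β ℝ} {Kb : Matrix β γ ℝ} (h : IsKerBasis M Kb) (x : γ → ℝ) :
    M *ᵥ (Kb *ᵥ x) = 0 := by
  have hmem : Kb *ᵥ x ∈ LinearMap.ker M.mulVecLin := h.2 ▸ ⟨x, rfl⟩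
  simpa using hmem

theorem stateSeq_sum {ι : Type*} [Fintype ι] (c : ι → ℝ) (x0 : ι → Fin n → ℝ)
    (x : ι → Fin T → Fin n → ℝ) :
    stateSeq (∑ i, c i • x0 i) (∑ i, c i • x i) = ∑ i, c i • stateSeq (x0 i) (x i) := by
  funext s
  refine Fin.cases ?_ (fun t => ?_) s <;> simp [stateSeq]

theorem IsTrajectory.sum {ι : Type*} [Fintype ι] (c : ι → ℝ) {x0 : ι → Fin n → ℝ}
    {u : ι → Fin T → Fin m → ℝ} {x : ι → Fin T → Fin n → ℝ}
    (h : ∀ i, IsTrajectory A B (x0 i) (u i) (x i)) :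
    IsTrajectory A B (∑ i, c i • x0 i) (∑ i, c i • u i) (∑ i, c i • x i) := by
  intro t
  simp only [stateSeq_sum, Finset.sum_apply, Pi.smul_apply, mulVec_sum, mulVec_smul,
    ← Finset.sum_add_distrib, ← smul_add, ← h _ t]

theorem IsTrajectory.apply_zero {x0 : Fin n → ℝ} {u : Fin T → Fin m → ℝ}
    {x : Fin T → Fin n → ℝ} (h : IsTrajectory A B x0 u x) (hT : 0 < T) :
    x ⟨0, hT⟩ = A *ᵥ x0 + B *ᵥ u ⟨0, hT⟩ :=
  h ⟨0, hT⟩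

theorem mulVec_eq_sum_smul_col {R α β : Type*} [CommSemiring R] [Fintype α] (M : Matrix β α R)
    (c : α → R) : M *ᵥ c = ∑ i, c i • fun j => M j i := by
  funext j
  simp [mulVec, dotProduct, Finset.sum_apply, mul_comm]

theorem DataGenerated.isTrajectory_mulVec {N : ℕ} {X0 : Matrix (Fin n) (Fin N) ℝ}
    {X : Matrix (Fin T × Fin n) (Fin N) ℝ} {U : Matrix (Fin T × Fin m) (Fin N) ℝ}
    (hdata : DataGenerated A B X0 X U) (c : Fin N → ℝ) :
    IsTrajectory A B (X0 *ᵥ c) (fun t k => (U *ᵥ c) (t, k)) (fun t j => (X *ᵥ c) (t, j)) := by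
  have h := IsTrajectory.sum c hdata
  convert h using 1 <;> funext <;> simp [mulVec_eq_sum_smul_col, Finset.sum_apply]

theorem LamMat_mulVec_apply (lam : ℝ) (v : Fin n → ℝ) (s : Fin (T + 1)) (j : Fin n) :
    (LamMat T n lam *ᵥ v) (s, j) = lam ^ (s : ℕ) * v j := by
  simp [LamMat, mulVec, dotProduct, ite_mul]

theorem Wmat_mulVec_apply (w : Fin (T + 1) × Fin n → ℝ) (t : Fin T) (j : Fin n) :
    (Wmat T n *ᵥ w) (t, j) = w (t.succ, j) := by
  simp [Wmat, mulVec, dotProduct, Fintype.sum_prod_type, ite_and]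

theorem Zmat_mulVec_apply (w : Fin (T + 1) × Fin n → ℝ) (t : Fin T) (j : Fin n) :
    (Zmat T n *ᵥ w) (t, j) = w (t.castSucc, j) := by
  simp [Zmat, mulVec, dotProduct, Fintype.sum_prod_type, ite_and]

theorem one_kronecker_mulVec_apply {R ι κ μ : Type*} [Semiring R] [Fintype ι] [DecidableEq ι]
    [Fintype κ] (K : Matrix μ κ R) (w : ι × κ → R) (t : ι) (k : μ) :
    ((1 : Matrix ι ι R) ⊗ₖ K *ᵥ w) (t, k) = (K *ᵥ fun j => w (t, j)) k := by
  simp [mulVec, dotProduct, Fintype.sum_prod_type, one_apply, ite_mul]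

end StateSpaceData

theorem stmt8_general {n m T N p q : ℕ}
    (A : Matrix (Fin n) (Fin n) ℝ) (B : Matrix (Fin n) (Fin m) ℝ)
    (X0 : Matrix (Fin n) (Fin N) ℝ) (X : Matrix (Fin T × Fin n) (Fin N) ℝ)
    (U : Matrix (Fin T × Fin m) (Fin N) ℝ)
    (hdata : DataGenerated A B X0 X U)
    (KU : Matrix (Fin N) (Fin p) ℝ) (K0 : Matrix (Fin N) (Fin q) ℝ)
    (hKU : IsKerBasis U KU) (hK0 : IsKerBasis X0 K0)
    (hT : 1 ≤ T)
    (K : Matrix (Fin m) (Fin n) ℝ) (lam : ℝ)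
    (α : Fin p → ℝ) (β : Fin q → ℝ)
    (h1 : X.mulVec (KU.mulVec α) + X.mulVec (K0.mulVec β) =
      (Wmat T n * LamMat T n lam).mulVec (X0.mulVec (KU.mulVec α)))
    (h2 : ((1 : Matrix (Fin T) (Fin T) ℝ) ⊗ₖ K * Zmat T n * LamMat T n lam).mulVec
      (X0.mulVec (KU.mulVec α)) + U.mulVec (K0.mulVec β) = 0)
    (v : Fin n → ℝ) (hv : X0.mulVec (KU.mulVec α) = v) :
    (A - B * K).mulVec v = lam • v := by
  set c := KU *ᵥ α + K0 *ᵥ β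
  have hX0c : X0 *ᵥ c = v := by
    rw [mulVec_add, hK0.mulVec_mulVec_eq_zero, add_zero, hv]
  have hXc : (fun j => (X *ᵥ c) (⟨0, hT⟩, j)) = lam • v := by
    funext j
    rw [mulVec_add, h1, hv, ← mulVec_mulVec, Wmat_mulVec_apply, LamMat_mulVec_apply]
    simp
  have hUc : (fun k => (U *ᵥ c) (⟨0, hT⟩, k)) = -(K *ᵥ v) := by
    funext k
    rw [mulVec_add, hKU.mulVec_mulVec_eq_zero, zero_add, eq_neg_of_add_eq_zero_right h2, hv]
    simp [← mulVec_mulVec, one_kronecker_mulVec_apply, Zmat_mulVec_apply, LamMat_mulVec_apply]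
  have hstep := (hdata.isTrajectory_mulVec c).apply_zero hT
  rw [hX0c, hXc, hUc] at hstep
  rw [sub_mulVec, ← mulVec_mulVec, hstep, mulVec_neg, sub_eq_add_neg]

/-- With `T ≥ 1`, if `α, β` satisfy `X K_U α + X K₀ β = W Λ_λ X₀ K_U α` and
`(I_T ⊗ K) Z Λ_λ X₀ K_U α + U K₀ β = 0`, and `v := X₀ K_U α ≠ 0`, then `v` is an eigenvector of
`A − B K` with eigenvalue `λ`. -/
theorem stmt8 {n m T N p q : ℕ}
    (A : Matrix (Fin n) (Fin n) ℝ) (B : Matrix (Fin n) (Fin m) ℝ)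
    (X0 : Matrix (Fin n) (Fin N) ℝ) (X : Matrix (Fin T × Fin n) (Fin N) ℝ)
    (U : Matrix (Fin T × Fin m) (Fin N) ℝ)
    (hdata : DataGenerated A B X0 X U)
    (KU : Matrix (Fin N) (Fin p) ℝ) (K0 : Matrix (Fin N) (Fin q) ℝ)
    (hKU : IsKerBasis U KU) (hK0 : IsKerBasis X0 K0)
    (hT : 1 ≤ T)
    (K : Matrix (Fin m) (Fin n) ℝ) (lam : ℝ)
    (α : Fin p → ℝ) (β : Fin q → ℝ)
    (h1 : X.mulVec (KU.mulVec α) + X.mulVec (K0.mulVec β) =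
      (Wmat T n * LamMat T n lam).mulVec (X0.mulVec (KU.mulVec α)))
    (h2 : ((1 : Matrix (Fin T) (Fin T) ℝ) ⊗ₖ K * Zmat T n * LamMat T n lam).mulVec
      (X0.mulVec (KU.mulVec α)) + U.mulVec (K0.mulVec β) = 0)
    (v : Fin n → ℝ) (hv : X0.mulVec (KU.mulVec α) = v) (hv0 : v ≠ 0) :
    (A - B * K).mulVec v = lam • v :=
  stmt8_general A B X0 X U hdata KU K0 hKU hK0 hT K lam α β h1 h2 v hv
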